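/- If a finite connected graph G on n vertices has a spanning tree with fewer than k internal vertices for every spanning tree (i.e., the maximum number of internal vertices is strictly less than k) and G has maximum degree at most 3, then for any spanning tree T, the number of leaves of T is less than k+2; consequently n ≤ 2k. -/

import Mathlib

open SimpleGraph

/-- Degree of a vertex in a graph, via set cardinality. -/
noncomputable def deg {V : Type*} (T : SimpleGraph V) (v : V) : ℕ := {u | T.Adj v u}.ncard

/-- `T` is a spanning tree of `G`. -/
def IsSpanningTree {V : Type*} (G T : SimpleGraph V) : Prop := T ≤ G ∧ T.IsTree

/-- Number of internal vertices (degree ≥ 2). -/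
noncomputable def internalCount {V : Type*} (T : SimpleGraph V) : ℕ := {v | 2 ≤ deg T v}.ncard

/-- Number of leaves (degree 1). -/
noncomputable def leafCount {V : Type*} (T : SimpleGraph V) : ℕ := {v | deg T v = 1}.ncard

/-- Number of vertices of degree exactly `i`. -/
noncomputable def degCount {V : Type*} (T : SimpleGraph V) (i : ℕ) : ℕ := {v | deg T v = i}.ncard

/-- `T` is a Hamiltonian path of `G`: a spanning tree all of whose degrees are ≤ 2. -/
def IsHamPath {V : Type*} (G T : SimpleGraph V) : Prop := IsSpanningTree G T ∧ ∀ v, deg T v ≤ 2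

/-!
In a tree all of whose degrees are at most 3, double counting edges (`∑ deg = 2n - 2`) gives
`t₁ = t₃ + 2`, so the leaves number at most the internal vertices plus two. Hence every spanning
tree has fewer than `k + 2` leaves, and a spanning tree with its `< k` internal vertices and at
most `k + 1` leaves has at most `2k` vertices.
-/

open Finset

section Degrees

variable {V : Type*} [Fintype V] {T : SimpleGraph V}

lemma deg_eq_degree (T : SimpleGraph V) [DecidableRel T.Adj] (v : V) : deg T v = T.degree v := by
  rw [deg, ← card_neighborSet_eq_degree, ← Nat.card_eq_fintype_card, Nat.card_coe_set_eq]
  rfl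

lemma deg_mono {G : SimpleGraph V} (h : T ≤ G) (v : V) : deg T v ≤ deg G v :=
  Set.ncard_le_ncard (fun _ hu => h hu) (Set.toFinite _)

lemma degCount_eq_card_filter (T : SimpleGraph V) (i : ℕ) :
    degCount T i = #{v | deg T v = i} := by
  rw [degCount, Set.ncard_eq_toFinset_card', Set.toFinset_ofPred]

lemma sum_range_degCount {m : ℕ} (hm : ∀ v, deg T v < m) :
    ∑ i ∈ range m, degCount T i = Fintype.card V := by
  simp_rw [degCount_eq_card_filter]
  exact (card_eq_sum_card_fiberwise fun v _ => mem_range.mpr (hm v)).symm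

lemma sum_range_mul_degCount {m : ℕ} (hm : ∀ v, deg T v < m) :
    ∑ i ∈ range m, i * degCount T i = ∑ v, deg T v := by
  rw [← sum_fiberwise_of_maps_to (g := deg T) fun v _ => mem_range.mpr (hm v)]
  refine sum_congr rfl fun i _ => ?_
  rw [degCount_eq_card_filter, sum_congr rfl fun v hv => (mem_filter.mp hv).2, sum_const,
    smul_eq_mul, mul_comm]

lemma leafCount_add_internalCount (hpos : ∀ v, 0 < deg T v) :
    leafCount T + internalCount T = Fintype.card V := by
  have hdisj : Disjoint {v | deg T v = 1} {v | 2 ≤ deg T v} :=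
    Set.disjoint_left.mpr fun v h1 h2 => by simp_all
  have hunion : {v | deg T v = 1} ∪ {v | 2 ≤ deg T v} = Set.univ :=
    Set.eq_univ_of_forall fun v => by
      have := hpos v
      simp only [Set.mem_union, Set.mem_ofPred_eq]
      omega
  rw [leafCount, internalCount, ← Set.ncard_union_eq hdisj, hunion, Set.ncard_univ,
    Nat.card_eq_fintype_card]

lemma degCount_three_le_internalCount (T : SimpleGraph V) : degCount T 3 ≤ internalCount T :=
  Set.ncard_le_ncard (fun v (hv : deg T v = 3) => show 2 ≤ deg T v by omega) (Set.toFinite _)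

end Degrees

namespace SimpleGraph.IsTree

variable {V : Type*} [Fintype V] {T : SimpleGraph V}

lemma sum_deg_add_two (hT : T.IsTree) : ∑ v, deg T v + 2 = 2 * Fintype.card V := by
  classical
  simp_rw [deg_eq_degree, sum_degrees_eq_twice_card_edges, ← hT.card_edgeFinset]
  ring

lemma deg_pos [Nontrivial V] (hT : T.IsTree) (v : V) : 0 < deg T v := by
  classical
  rw [deg_eq_degree]
  exact hT.connected.preconnected.degree_pos_of_nontrivial v

lemma degCount_one_eq_degCount_three_add_two [Nontrivial V] (hT : T.IsTree)
    (h3 : ∀ v, deg T v ≤ 3) : degCount T 1 = degCount T 3 + 2 := by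
  have hm : ∀ v, deg T v < 4 := fun v => Nat.lt_succ_of_le (h3 v)
  have hcard := sum_range_degCount hm
  have hsum := sum_range_mul_degCount hm
  have hzero : degCount T 0 = 0 :=
    (Set.ncard_eq_zero).mpr (Set.eq_empty_of_forall_notMem fun v hv => (hT.deg_pos v).ne' hv)
  have handshake := hT.sum_deg_add_two
  simp only [sum_range_succ, sum_range_zero] at hcard hsum
  omega

lemma leafCount_le_internalCount_add_two [Nontrivial V] (hT : T.IsTree)
    (h3 : ∀ v, deg T v ≤ 3) : leafCount T ≤ internalCount T + 2 := by
  have hthree := degCount_three_le_internalCount T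
  have hleaves := hT.degCount_one_eq_degCount_three_add_two h3
  rw [leafCount, ← degCount]
  omega

end SimpleGraph.IsTree

theorem stmt6_general {V : Type*} [Fintype V] (G : SimpleGraph V) (hG : G.Connected)
    (hdeg : ∀ v, deg G v ≤ 3) (hn : 2 ≤ Fintype.card V) (k : ℕ)
    (hmax : ∀ T : SimpleGraph V, IsSpanningTree G T → internalCount T < k) :
    (∀ T : SimpleGraph V, IsSpanningTree G T → leafCount T < k + 2) ∧
    Fintype.card V ≤ 2 * k := by
  have : Nontrivial V := Fintype.one_lt_card_iff_nontrivial.mp hn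
  have hleaf (T : SimpleGraph V) (hT : IsSpanningTree G T) : leafCount T ≤ internalCount T + 2 :=
    hT.2.leafCount_le_internalCount_add_two fun v => (deg_mono hT.1 v).trans (hdeg v)
  refine ⟨fun T hT => (hleaf T hT).trans_lt (by have := hmax T hT; omega), ?_⟩
  obtain ⟨T, hTG, hT⟩ := hG.exists_isTree_le
  have hST : IsSpanningTree G T := ⟨hTG, hT⟩
  have hpartition := leafCount_add_internalCount hT.deg_pos
  have := hleaf T hST
  have := hmax T hST
  omega

theorem stmt6 {V : Type*} [Fintype V] (G : SimpleGraph V) (hG : G.Connected)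
    (hdeg : ∀ v, deg G v ≤ 3) (hn : 2 ≤ Fintype.card V) (k : ℕ) (hk : 0 < k)
    (hmax : ∀ T : SimpleGraph V, IsSpanningTree G T → internalCount T < k) :
    (∀ T : SimpleGraph V, IsSpanningTree G T → leafCount T < k + 2) ∧
    Fintype.card V ≤ 2 * k :=
  stmt6_general G hG hdeg hn k hmax
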